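/- Let Z ∈ R^{nd×d} be the block matrix with all n blocks equal to I_d, and let S ∈ R^{nd×d} have each d×d block orthogonal. If min_{Q ∈ O(d)} ‖S − Z Q‖_F ≤ ε√(nd), then every singular value σ_i(Z^⊤ S) satisfies (1 − ε²d/2)·n ≤ σ_i(Z^⊤ S) ≤ n. -/

import Mathlib

/-!
Write `A = Zᵀ S = ∑ᵢ Sᵢ`. Each block `Sᵢ` is an isometry, so `‖A x‖ ≤ n ‖x‖` and every singular
value of `A` is at most `n`. For orthogonal `Q`, `‖S − Z Q‖_F² = 2nd − 2 tr(Qᵀ A)`, and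
`tr(Qᵀ A) ≤ ∑ⱼ σⱼ(A)`: compute the trace in an orthonormal eigenbasis `vⱼ` of `AᵀA`, where
`⟪vⱼ, Qᵀ A vⱼ⟫ = ⟪Q vⱼ, A vⱼ⟫ ≤ ‖A vⱼ‖ = σⱼ(A)`. Hence `∑ⱼ σⱼ(A) ≥ nd − d_F(S, Z)²/2 ≥ nd − ε²nd/2`,
and as the other `d − 1` singular values are at most `n`, each one is at least `(1 − ε²d/2) n`.
-/

open Matrix BigOperators

noncomputable def frob {m n : Type*} [Fintype m] [Fintype n] (A : Matrix m n ℝ) : ℝ :=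
  Real.sqrt (∑ i, ∑ j, (A i j) ^ 2)

def IsOrtho {d : ℕ} (Q : Matrix (Fin d) (Fin d) ℝ) : Prop :=
  Q * Qᵀ = 1 ∧ Qᵀ * Q = 1

noncomputable def dF {m : Type*} [Fintype m] {d : ℕ}
    (X Y : Matrix m (Fin d) ℝ) : ℝ :=
  sInf {r : ℝ | ∃ Q : Matrix (Fin d) (Fin d) ℝ, IsOrtho Q ∧ r = frob (X - Y * Q)}

/-- The block matrix `Z` consisting of `n` copies of `I_d`. -/
def Zmat (n d : ℕ) : Matrix (Fin n × Fin d) (Fin d) ℝ :=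
  Matrix.of fun p j => if p.2 = j then 1 else 0

/-- The `i`-th `d × d` block of an `nd × d` matrix. -/
def blk {n d : ℕ} (X : Matrix (Fin n × Fin d) (Fin d) ℝ) (i : Fin n) :
    Matrix (Fin d) (Fin d) ℝ :=
  Matrix.of fun a b => X (i, a) b

/-- The singular values of a square real matrix. -/
noncomputable def sv {d : ℕ} (A : Matrix (Fin d) (Fin d) ℝ) (i : Fin d) : ℝ :=
  Real.sqrt ((Matrix.isHermitian_conjTranspose_mul_self A).eigenvalues i)

section EuclideanMatrix

variable {ι : Type*} [Fintype ι] [DecidableEq ι]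

lemma inner_toEuclideanLin_transpose (A : Matrix ι ι ℝ) (x y : EuclideanSpace ℝ ι) :
    inner ℝ x (toEuclideanLin Aᵀ y) = inner ℝ (toEuclideanLin A x) y := by
  rw [← conjTranspose_eq_transpose_of_trivial, toEuclideanLin_conjTranspose_eq_adjoint,
    LinearMap.adjoint_inner_right]

lemma norm_toEuclideanLin_of_transpose_mul_self {M : Matrix ι ι ℝ} (hM : Mᵀ * M = 1)
    (x : EuclideanSpace ℝ ι) : ‖toEuclideanLin M x‖ = ‖x‖ := by
  rw [← sq_eq_sq₀ (norm_nonneg _) (norm_nonneg _), ← real_inner_self_eq_norm_sq,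
    ← real_inner_self_eq_norm_sq, ← inner_toEuclideanLin_transpose, ← LinearMap.comp_apply,
    ← toLpLin_mul_same, hM, toLpLin_one, LinearMap.id_apply]

lemma norm_toEuclideanLin_sum_le {κ : Type*} [Fintype κ] (M : κ → Matrix ι ι ℝ)
    (hM : ∀ k, (M k)ᵀ * M k = 1) (x : EuclideanSpace ℝ ι) :
    ‖toEuclideanLin (∑ k, M k) x‖ ≤ Fintype.card κ * ‖x‖ :=
  calc ‖toEuclideanLin (∑ k, M k) x‖ = ‖∑ k, toEuclideanLin (M k) x‖ := by
        rw [map_sum, LinearMap.sum_apply]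
    _ ≤ ∑ k, ‖toEuclideanLin (M k) x‖ := norm_sum_le _ _
    _ = Fintype.card κ * ‖x‖ := by
        simp [norm_toEuclideanLin_of_transpose_mul_self (hM _)]

lemma trace_toEuclideanLin (A : Matrix ι ι ℝ) :
    LinearMap.trace ℝ _ (toEuclideanLin A) = A.trace := by
  rw [toEuclideanLin_eq_toLin_orthonormal, trace_toLin_eq]

end EuclideanMatrix

section SingularValues

variable {d : ℕ}

lemma sv_eq_norm_toEuclideanLin_eigenvectorBasis (B : Matrix (Fin d) (Fin d) ℝ) (j : Fin d) :
    sv B j =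
      ‖toEuclideanLin B ((isHermitian_conjTranspose_mul_self B).eigenvectorBasis j)‖ := by
  set hB := isHermitian_conjTranspose_mul_self B
  set v := hB.eigenvectorBasis j
  have hv : toEuclideanLin (Bᵀ * B) v = hB.eigenvalues j • v := by
    rw [← conjTranspose_eq_transpose_of_trivial, toLpLin_apply, hB.mulVec_eigenvectorBasis]
    rfl
  have heig : hB.eigenvalues j = ‖toEuclideanLin B v‖ ^ 2 := by
    rw [← real_inner_self_eq_norm_sq, ← inner_toEuclideanLin_transpose, ← LinearMap.comp_apply,
      ← toLpLin_mul_same, hv, real_inner_smul_right, real_inner_self_eq_norm_sq,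
      hB.eigenvectorBasis.norm_eq_one, one_pow, mul_one]
  rw [sv, heig, Real.sqrt_sq (norm_nonneg _)]


lemma sv_le_of_forall_norm_le {B : Matrix (Fin d) (Fin d) ℝ} {c : ℝ}
    (h : ∀ x, ‖toEuclideanLin B x‖ ≤ c * ‖x‖) (j : Fin d) : sv B j ≤ c := by
  rw [sv_eq_norm_toEuclideanLin_eigenvectorBasis]
  simpa using h ((isHermitian_conjTranspose_mul_self B).eigenvectorBasis j)

lemma trace_transpose_mul_le_sum_sv {Q : Matrix (Fin d) (Fin d) ℝ} (hQ : Qᵀ * Q = 1)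
    (B : Matrix (Fin d) (Fin d) ℝ) : (Qᵀ * B).trace ≤ ∑ j, sv B j := by
  set b := (isHermitian_conjTranspose_mul_self B).eigenvectorBasis
  calc (Qᵀ * B).trace = ∑ j, inner ℝ (b j) (toEuclideanLin (Qᵀ * B) (b j)) := by
        rw [← trace_toEuclideanLin, LinearMap.trace_eq_sum_inner _ b]
    _ = ∑ j, inner ℝ (toEuclideanLin Q (b j)) (toEuclideanLin B (b j)) := by
        simp_rw [toLpLin_mul_same, LinearMap.comp_apply, inner_toEuclideanLin_transpose]
    _ ≤ ∑ j, ‖toEuclideanLin Q (b j)‖ * ‖toEuclideanLin B (b j)‖ :=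
        Finset.sum_le_sum fun j _ => real_inner_le_norm _ _
    _ = ∑ j, sv B j := by
        simp_rw [norm_toEuclideanLin_of_transpose_mul_self hQ, b.norm_eq_one, one_mul,
          sv_eq_norm_toEuclideanLin_eigenvectorBasis, b]

end SingularValues

section Frobenius

variable {m n : Type*} [Fintype m] [Fintype n]

lemma frob_nonneg (A : Matrix m n ℝ) : 0 ≤ frob A :=
  Real.sqrt_nonneg _

lemma frob_sq (A : Matrix m n ℝ) : frob A ^ 2 = (Aᵀ * A).trace := by
  rw [frob, Real.sq_sqrt (by positivity), Finset.sum_comm]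
  simp [trace, mul_apply, sq]

lemma frob_sub_sq (X Y : Matrix m n ℝ) :
    frob (X - Y) ^ 2 = (Xᵀ * X).trace + (Yᵀ * Y).trace - 2 * (Yᵀ * X).trace := by
  have hXY : (Xᵀ * Y).trace = (Yᵀ * X).trace := by
    rw [← trace_transpose, transpose_mul, transpose_transpose]
  rw [frob_sq, transpose_sub, Matrix.sub_mul, Matrix.mul_sub, Matrix.mul_sub, trace_sub, trace_sub, trace_sub, hXY]
  ring

lemma le_dF_of_forall_le {d : ℕ} {X Y : Matrix m (Fin d) ℝ} {a : ℝ}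
    (h : ∀ Q : Matrix (Fin d) (Fin d) ℝ, IsOrtho Q → a ≤ frob (X - Y * Q)) : a ≤ dF X Y :=
  le_csInf ⟨_, 1, ⟨by simp, by simp⟩, rfl⟩ (by rintro _ ⟨Q, hQ, rfl⟩; exact h Q hQ)

end Frobenius

lemma sum_add_le_add_card_nsmul {ι α : Type*} [Fintype ι] [DecidableEq ι] [AddCommMonoid α]
    [PartialOrder α] [IsOrderedAddMonoid α] {f : ι → α} {M : α} (h : ∀ j, f j ≤ M) (i : ι) :
    ∑ j, f j + M ≤ f i + Fintype.card ι • M := by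
  rw [← Finset.add_sum_erase _ f (Finset.mem_univ i), ← Finset.card_univ, ← Finset.sum_const,
    ← Finset.add_sum_erase _ (fun _ => M) (Finset.mem_univ i), add_assoc, add_comm M]
  gcongr with j
  exact h j

section Blocks

variable {n d : ℕ}

lemma transpose_mul_eq_sum_blk (X Y : Matrix (Fin n × Fin d) (Fin d) ℝ) :
    Xᵀ * Y = ∑ i, (blk X i)ᵀ * blk Y i := by
  ext a b
  simp [mul_apply, blk, Matrix.sum_apply, Fintype.sum_prod_type]

lemma blk_Zmat (i : Fin n) : blk (Zmat n d) i = 1 := by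
  ext a b
  simp [blk, Zmat, one_apply]

lemma Zmat_transpose_mul (S : Matrix (Fin n × Fin d) (Fin d) ℝ) :
    (Zmat n d)ᵀ * S = ∑ i, blk S i := by
  simp [transpose_mul_eq_sum_blk, blk_Zmat]

lemma transpose_mul_self_of_isOrtho_blk {S : Matrix (Fin n × Fin d) (Fin d) ℝ}
    (hS : ∀ i, IsOrtho (blk S i)) : Sᵀ * S = (n : ℝ) • 1 := by
  rw [transpose_mul_eq_sum_blk, Finset.sum_congr rfl fun i _ => (hS i).2, Finset.sum_const,
    Finset.card_univ, Fintype.card_fin, Nat.cast_smul_eq_nsmul]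

lemma frob_sub_Zmat_mul_sq {S : Matrix (Fin n × Fin d) (Fin d) ℝ}
    (hS : ∀ i, IsOrtho (blk S i)) {Q : Matrix (Fin d) (Fin d) ℝ} (hQ : IsOrtho Q) :
    frob (S - Zmat n d * Q) ^ 2 = 2 * (n * d) - 2 * (Qᵀ * ((Zmat n d)ᵀ * S)).trace := by
  have hZ : (Zmat n d)ᵀ * Zmat n d = (n : ℝ) • 1 :=
    transpose_mul_self_of_isOrtho_blk fun i => by simp [blk_Zmat, IsOrtho]
  have hZQ : (Zmat n d * Q)ᵀ * (Zmat n d * Q) = (n : ℝ) • 1 := by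
    rw [transpose_mul, Matrix.mul_assoc, ← Matrix.mul_assoc (Zmat n d)ᵀ, hZ, smul_one_mul,
      Matrix.mul_smul, hQ.2]
  rw [frob_sub_sq, transpose_mul_self_of_isOrtho_blk hS, hZQ, transpose_mul, Matrix.mul_assoc]
  simp only [trace_smul, trace_one, Fintype.card_fin, smul_eq_mul]
  ring

lemma sv_Zmat_transpose_mul_le {S : Matrix (Fin n × Fin d) (Fin d) ℝ}
    (hS : ∀ i, IsOrtho (blk S i)) (j : Fin d) : sv ((Zmat n d)ᵀ * S) j ≤ n :=
  sv_le_of_forall_norm_le (fun x => by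
    simpa [Zmat_transpose_mul] using norm_toEuclideanLin_sum_le (blk S) (fun i => (hS i).2) x) j

lemma sum_sv_Zmat_transpose_mul_ge {S : Matrix (Fin n × Fin d) (Fin d) ℝ}
    (hS : ∀ i, IsOrtho (blk S i)) :
    n * d - dF S (Zmat n d) ^ 2 / 2 ≤ ∑ j, sv ((Zmat n d)ᵀ * S) j := by
  set s := ∑ j, sv ((Zmat n d)ᵀ * S) j
  have hdF : √(2 * (n * d - s)) ≤ dF S (Zmat n d) := le_dF_of_forall_le fun Q hQ =>
    Real.sqrt_le_iff.2 ⟨frob_nonneg _, by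
      rw [frob_sub_Zmat_mul_sq hS hQ]
      linarith [trace_transpose_mul_le_sum_sv hQ.2 ((Zmat n d)ᵀ * S)]⟩
  linarith [(Real.sqrt_le_iff.1 hdF).2]

end Blocks

/-- All singular values of `Zᵀ S` lie in `[(1 − ε²d/2)·n, n]` when
`d_F(S, Z) ≤ ε √(nd)` and the blocks of `S` are orthogonal. -/
theorem singular_values_ZtS (n d : ℕ) (ε : ℝ)
    (S : Matrix (Fin n × Fin d) (Fin d) ℝ)
    (hS : ∀ i : Fin n, IsOrtho (blk S i))
    (hclose : dF S (Zmat n d) ≤ ε * Real.sqrt (n * d)) :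
    ∀ i : Fin d,
      (1 - ε ^ 2 * d / 2) * n ≤ sv ((Zmat n d)ᵀ * S) i ∧
      sv ((Zmat n d)ᵀ * S) i ≤ n := by
  intro i
  have hle := sv_Zmat_transpose_mul_le hS
  have hsum := sum_sv_Zmat_transpose_mul_ge hS
  have hdF : dF S (Zmat n d) ^ 2 ≤ ε ^ 2 * (n * d) :=
    calc dF S (Zmat n d) ^ 2 ≤ (ε * √(n * d)) ^ 2 :=
          pow_le_pow_left₀ (le_dF_of_forall_le fun _ _ => frob_nonneg _) hclose 2
      _ = ε ^ 2 * (n * d) := by rw [mul_pow, Real.sq_sqrt (by positivity)]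
  have hsplit := sum_add_le_add_card_nsmul hle i
  rw [Fintype.card_fin, nsmul_eq_mul] at hsplit
  exact ⟨by linarith, hle i⟩
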